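/- Let g, h ∈ GL_n(𝔽_q). If ℓ(gh) = ℓ(g) + ℓ(h), then ker(g − 1) ∩ ker(h − 1) = ker(gh − 1) and ker(g − 1) + ker(h − 1) = 𝔽_q^n (where ker denotes the fixed-point subspace, i.e. the kernel of the indicated matrix minus the identity). -/

import Mathlib

/-!
The reflection length of `g` is `rank (g - 1) = codim V^g`. It is at least that since
`V^g ∩ V^h ⊆ V^{gh}` makes `codim V^·` subadditive. It is at most that since for `g ≠ 1` there are
a hyperplane `H ⊇ V^g` and a vector `v` with `v, gv ∉ H`; the reflection `s` fixing `H` and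
sending `gv` to `v` makes `sg` fix `V^g + Fv`, so induction on `codim V^g` applies.
Given this, `dim (V^g + V^h) + dim (V^g ∩ V^h) = dim V^g + dim V^h` together with
`V^g + V^h ⊆ V` and `V^g ∩ V^h ⊆ V^{gh}` shows that `ℓ(gh) = ℓ(g) + ℓ(h)` forces both
inclusions to be equalities.
-/

open Matrix

variable {F : Type*} [Field F] [Fintype F] [DecidableEq F]

/-- An element of `GL n F` is a reflection if its fixed point subspace has
codimension one, i.e. `s - 1` has rank one. -/
def IsReflection {n : ℕ} (s : GL (Fin n) F) : Prop :=
  ((s : Matrix (Fin n) (Fin n) F) - 1).rank = 1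

/-- The reflection length of `g`: the least `k` such that `g` is a product of
`k` reflections. -/
noncomputable def reflLength {n : ℕ} (g : GL (Fin n) F) : ℕ :=
  sInf {k | ∃ l : List (GL (Fin n) F),
    l.length = k ∧ (∀ s ∈ l, IsReflection s) ∧ l.prod = g}

open Module LinearMap

section FixedSpace

variable {m K : Type*} [Fintype m] [DecidableEq m] [Field K]

def fixedSpace (A : Matrix m m K) : Submodule K (m → K) :=
  ker (toLin' (A - 1))

theorem mem_fixedSpace {A : Matrix m m K} {x : m → K} : x ∈ fixedSpace A ↔ A *ᵥ x = x := by
  simp [fixedSpace, sub_eq_zero]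

theorem rank_sub_one_add_finrank_fixedSpace (A : Matrix m m K) :
    (A - 1).rank + finrank K (fixedSpace A) = Fintype.card m := by
  have := (toLin' (A - 1)).finrank_range_add_finrank_ker
  rwa [finrank_fintype_fun_eq_card] at this

theorem Matrix.rank_eq_zero_iff {A : Matrix m m K} : A.rank = 0 ↔ A = 0 := by
  rw [Matrix.rank, Submodule.finrank_eq_zero, LinearMap.range_eq_bot]
  exact toLin'.map_eq_zero_iff

theorem rank_sub_one_lt_of_fixedSpace_lt {A B : Matrix m m K} (h : fixedSpace A < fixedSpace B) :
    (B - 1).rank < (A - 1).rank := by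
  have := Submodule.finrank_lt_finrank_of_lt h
  have := rank_sub_one_add_finrank_fixedSpace A
  have := rank_sub_one_add_finrank_fixedSpace B
  omega

theorem fixedSpace_inf_le_fixedSpace_mul (A B : Matrix m m K) :
    fixedSpace A ⊓ fixedSpace B ≤ fixedSpace (A * B) := by
  rintro x ⟨hA, hB⟩
  rw [SetLike.mem_coe, mem_fixedSpace] at hA hB
  rw [mem_fixedSpace, ← mulVec_mulVec, hB, hA]

theorem finrank_fixedSpace_add_le (A B : Matrix m m K) :
    finrank K (fixedSpace A) + finrank K (fixedSpace B) ≤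
      finrank K ↥(fixedSpace A ⊔ fixedSpace B) + finrank K (fixedSpace (A * B)) := by
  rw [← Submodule.finrank_sup_add_finrank_inf_eq]
  exact Nat.add_le_add_left (Submodule.finrank_mono (fixedSpace_inf_le_fixedSpace_mul A B)) _

theorem rank_mul_sub_one_le (A B : Matrix m m K) :
    (A * B - 1).rank ≤ (A - 1).rank + (B - 1).rank := by
  have := finrank_fixedSpace_add_le A B
  have := (Submodule.finrank_le (fixedSpace A ⊔ fixedSpace B)).trans_eq
    (finrank_fintype_fun_eq_card K)
  have := rank_sub_one_add_finrank_fixedSpace A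
  have := rank_sub_one_add_finrank_fixedSpace B
  have := rank_sub_one_add_finrank_fixedSpace (A * B)
  omega

theorem fixedSpace_inf_eq_and_sup_eq_top_of_rank_mul_sub_one_eq {A B : Matrix m m K}
    (h : (A * B - 1).rank = (A - 1).rank + (B - 1).rank) :
    fixedSpace A ⊓ fixedSpace B = fixedSpace (A * B) ∧ fixedSpace A ⊔ fixedSpace B = ⊤ := by
  have := finrank_fixedSpace_add_le A B
  have := (Submodule.finrank_le (fixedSpace A ⊔ fixedSpace B)).trans_eq
    (finrank_fintype_fun_eq_card K)
  have := Submodule.finrank_sup_add_finrank_inf_eq (fixedSpace A) (fixedSpace B)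
  have := rank_sub_one_add_finrank_fixedSpace A
  have := rank_sub_one_add_finrank_fixedSpace B
  have := rank_sub_one_add_finrank_fixedSpace (A * B)
  refine ⟨Submodule.eq_of_le_of_finrank_eq (fixedSpace_inf_le_fixedSpace_mul A B) (by omega),
    Submodule.eq_top_of_finrank_eq ?_⟩
  rw [finrank_fintype_fun_eq_card]
  omega

end FixedSpace

theorem exists_dotProduct_ne_zero_and_ne_zero {m R : Type*} [Fintype m] [DecidableEq m]
    [Semiring R] {p q : m → R} (hp : p ≠ 0) (hq : q ≠ 0) :
    ∃ v, p ⬝ᵥ v ≠ 0 ∧ q ⬝ᵥ v ≠ 0 := by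
  obtain ⟨i, hi⟩ := Function.ne_iff.1 hp
  obtain ⟨j, hj⟩ := Function.ne_iff.1 hq
  have hpi : p ⬝ᵥ Pi.single i 1 ≠ 0 := by rwa [dotProduct_single, mul_one]
  have hqj : q ⬝ᵥ Pi.single j 1 ≠ 0 := by rwa [dotProduct_single, mul_one]
  by_cases hqi : q ⬝ᵥ Pi.single i 1 = 0
  · by_cases hpj : p ⬝ᵥ Pi.single j 1 = 0
    · exact ⟨Pi.single i 1 + Pi.single j 1, by simpa [dotProduct_add, hpj] using hpi,
        by simpa [dotProduct_add, hqi] using hqj⟩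
    · exact ⟨Pi.single j 1, hpj, hqj⟩
  · exact ⟨Pi.single i 1, hpi, hqi⟩

section HyperplaneReflection

variable {m K : Type*} [Fintype m] [DecidableEq m] [Field K]

/-- Fixes the hyperplane `p ⬝ᵥ z = 0` pointwise and sends `x` to `y` (when `p ⬝ᵥ x ≠ 0`). -/
def hyperplaneReflection (p x y : m → K) : Matrix m m K :=
  1 + vecMulVec (y - x) ((p ⬝ᵥ x)⁻¹ • p)

theorem hyperplaneReflection_mulVec (p x y z : m → K) :
    hyperplaneReflection p x y *ᵥ z = z + ((p ⬝ᵥ x)⁻¹ * p ⬝ᵥ z) • (y - x) := by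
  rw [hyperplaneReflection, add_mulVec, one_mulVec, vecMulVec_mulVec, smul_dotProduct, smul_eq_mul,
    op_smul_eq_smul]

theorem hyperplaneReflection_mulVec_of_dotProduct_eq_zero {p z : m → K} (x y : m → K)
    (hz : p ⬝ᵥ z = 0) : hyperplaneReflection p x y *ᵥ z = z := by
  simp [hyperplaneReflection_mulVec, hz]

theorem hyperplaneReflection_mulVec_self {p x : m → K} (y : m → K) (hx : p ⬝ᵥ x ≠ 0) :
    hyperplaneReflection p x y *ᵥ x = y := by
  simp [hyperplaneReflection_mulVec, hx]

theorem hyperplaneReflection_mul_hyperplaneReflection {p x y : m → K} (hx : p ⬝ᵥ x ≠ 0)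
    (hy : p ⬝ᵥ y ≠ 0) : hyperplaneReflection p x y * hyperplaneReflection p y x = 1 := by
  refine toLin'.injective (LinearMap.ext fun z => ?_)
  have hcoeff : (p ⬝ᵥ x)⁻¹ * (p ⬝ᵥ z + (p ⬝ᵥ y)⁻¹ * p ⬝ᵥ z * (p ⬝ᵥ x - p ⬝ᵥ y)) =
      (p ⬝ᵥ y)⁻¹ * p ⬝ᵥ z := by
    field_simp
    ring
  simp only [toLin'_apply, ← mulVec_mulVec, one_mulVec, hyperplaneReflection_mulVec,
    dotProduct_add, dotProduct_smul, dotProduct_sub, smul_eq_mul, hcoeff]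
  rw [← neg_sub y x, smul_neg, neg_add_cancel_right]

theorem rank_hyperplaneReflection_sub_one {p x y : m → K} (hx : p ⬝ᵥ x ≠ 0) (hxy : x ≠ y) :
    (hyperplaneReflection p x y - 1).rank = 1 := by
  refine le_antisymm ?_ (Nat.one_le_iff_ne_zero.2 ?_)
  · rw [hyperplaneReflection, add_sub_cancel_left]
    exact rank_vecMulVec_le _ _
  · rw [Ne, Matrix.rank_eq_zero_iff, sub_eq_zero]
    intro h
    apply hxy
    rw [← hyperplaneReflection_mulVec_self y hx, h, one_mulVec]

theorem fixedSpace_lt_fixedSpace_hyperplaneReflection_mul {A : Matrix m m K} {p v : m → K}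
    (hp : ∀ w ∈ fixedSpace A, p ⬝ᵥ w = 0) (hv : p ⬝ᵥ v ≠ 0) (hAv : p ⬝ᵥ (A *ᵥ v) ≠ 0) :
    fixedSpace A < fixedSpace (hyperplaneReflection p (A *ᵥ v) v * A) := by
  refine SetLike.lt_iff_le_and_exists.2 ⟨fun w hw => ?_, v, ?_, fun hvA => hv (hp v hvA)⟩
  · have hw' := mem_fixedSpace.1 hw
    rw [mem_fixedSpace, ← mulVec_mulVec, hw',
      hyperplaneReflection_mulVec_of_dotProduct_eq_zero _ _ (hp w hw)]
  · rw [mem_fixedSpace, ← mulVec_mulVec, hyperplaneReflection_mulVec_self _ hAv]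

end HyperplaneReflection

section ReflectionLength

variable {K : Type*} [Field K] {n : ℕ}

theorem rank_sub_one_list_prod_le_length (l : List (GL (Fin n) K))
    (hl : ∀ s ∈ l, IsReflection s) :
    (((l.prod : GL (Fin n) K) : Matrix (Fin n) (Fin n) K) - 1).rank ≤ l.length := by
  induction l with
  | nil => simp
  | cons s l ih =>
    have hs : IsReflection s := hl s List.mem_cons_self
    have hl := ih fun t ht => hl t (List.mem_cons_of_mem s ht)
    have := rank_mul_sub_one_le (s : Matrix (Fin n) (Fin n) K) l.prod
    rw [IsReflection] at hs
    rw [List.prod_cons, Units.val_mul, List.length_cons]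
    omega

theorem exists_isReflection_rank_sub_one_inv_mul_lt {g : GL (Fin n) K} (hg : g ≠ 1) :
    ∃ t : GL (Fin n) K, IsReflection t ∧
      (((t⁻¹ * g : GL (Fin n) K) : Matrix (Fin n) (Fin n) K) - 1).rank <
        ((g : Matrix (Fin n) (Fin n) K) - 1).rank := by
  set A := (g : Matrix (Fin n) (Fin n) K)
  obtain ⟨i, hi⟩ : ∃ i, (A - 1) i ≠ 0 :=
    Function.ne_iff.1 (sub_ne_zero.2 fun h => hg (Units.ext h))
  -- a nonzero row of `g - 1` vanishes on the fixed space of `g`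
  set p := (A - 1) i
  have hpA : ∀ w ∈ fixedSpace A, p ⬝ᵥ w = 0 := fun w hw => by
    change ((A - 1) *ᵥ w) i = 0
    rw [sub_mulVec, one_mulVec, mem_fixedSpace.1 hw, sub_self, Pi.zero_apply]
  have hpg : p ᵥ* A ≠ 0 := fun h => hi <| by
    rw [← vecMul_one p, ← g.mul_inv, ← vecMul_vecMul, h, zero_vecMul]
  obtain ⟨v, hv, hAv⟩ := exists_dotProduct_ne_zero_and_ne_zero hi hpg
  rw [← dotProduct_mulVec] at hAv
  refine ⟨⟨hyperplaneReflection p v (A *ᵥ v), hyperplaneReflection p (A *ᵥ v) v,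
    hyperplaneReflection_mul_hyperplaneReflection hv hAv,
    hyperplaneReflection_mul_hyperplaneReflection hAv hv⟩, ?_, ?_⟩
  · refine rank_hyperplaneReflection_sub_one hv fun hfix => hv (hpA v ?_)
    exact mem_fixedSpace.2 hfix.symm
  · exact rank_sub_one_lt_of_fixedSpace_lt
      (fixedSpace_lt_fixedSpace_hyperplaneReflection_mul hpA hv hAv)

theorem exists_isReflection_list_prod_eq (g : GL (Fin n) K) :
    ∃ l : List (GL (Fin n) K), (∀ s ∈ l, IsReflection s) ∧ l.prod = g ∧
      l.length ≤ ((g : Matrix (Fin n) (Fin n) K) - 1).rank := by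
  induction hr : ((g : Matrix (Fin n) (Fin n) K) - 1).rank using Nat.strong_induction_on
    generalizing g with
  | _ r ih =>
  by_cases hg : g = 1
  · exact ⟨[], by simp, by simp [hg], by simp⟩
  obtain ⟨t, ht, hlt⟩ := exists_isReflection_rank_sub_one_inv_mul_lt hg
  obtain ⟨l, hl, hprod, hlen⟩ := ih _ (hr ▸ hlt) (t⁻¹ * g) rfl
  refine ⟨t :: l, ?_, by rw [List.prod_cons, hprod, mul_inv_cancel_left], ?_⟩
  · exact List.forall_mem_cons.2 ⟨ht, hl⟩
  · rw [List.length_cons]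
    omega

theorem reflLength_eq_rank_sub_one (g : GL (Fin n) K) :
    reflLength g = ((g : Matrix (Fin n) (Fin n) K) - 1).rank := by
  obtain ⟨l, hl, hprod, hlen⟩ := exists_isReflection_list_prod_eq g
  unfold reflLength
  have hmem : l.length ∈ {k | ∃ l : List (GL (Fin n) K),
      l.length = k ∧ (∀ s ∈ l, IsReflection s) ∧ l.prod = g} := ⟨l, rfl, hl, hprod⟩
  refine le_antisymm ((Nat.sInf_le hmem).trans hlen) (le_csInf ⟨_, hmem⟩ ?_)
  rintro k ⟨l', rfl, hl', rfl⟩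
  exact rank_sub_one_list_prod_le_length l' hl'

end ReflectionLength

/-- If `ℓ(gh) = ℓ(g) + ℓ(h)`, then the fixed point subspaces satisfy
`V^g ∩ V^h = V^{gh}` and `V^g + V^h = 𝔽_q^n`. -/
theorem fixed_spaces_of_length_add {n : ℕ} (g h : GL (Fin n) F)
    (hlen : reflLength (g * h) = reflLength g + reflLength h) :
    LinearMap.ker (Matrix.toLin' ((g : Matrix (Fin n) (Fin n) F) - 1)) ⊓
        LinearMap.ker (Matrix.toLin' ((h : Matrix (Fin n) (Fin n) F) - 1)) =
      LinearMap.ker (Matrix.toLin'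
        (((g * h : GL (Fin n) F) : Matrix (Fin n) (Fin n) F) - 1)) ∧
    LinearMap.ker (Matrix.toLin' ((g : Matrix (Fin n) (Fin n) F) - 1)) ⊔
        LinearMap.ker (Matrix.toLin' ((h : Matrix (Fin n) (Fin n) F) - 1)) = ⊤ := by
  rw [reflLength_eq_rank_sub_one, reflLength_eq_rank_sub_one, reflLength_eq_rank_sub_one,
    Units.val_mul] at hlen
  exact fixedSpace_inf_eq_and_sup_eq_top_of_rank_mul_sub_one_eq hlen
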